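/- Let g : ℝ → ℂ be an integrable function vanishing outside the interval [-1, 1], and suppose g is not almost everywhere zero. Then the set {r ∈ ℝ : ∫_ℝ exp(i r t) g(t) dt = 0} is countable. -/

import Mathlib

/-!
Because `g` has compact support, `F z = ∫ exp(i z t) g t dt` is an entire function of `z`
(differentiate under the integral sign), and on the real line it is the Fourier transform of `g`
up to rescaling. The Fourier transform of an integrable function determines it almost everywhere:
every test function is the Fourier transform of a Schwartz function, so the multiplication formula
`∫ 𝓕χ • g = ∫ χ • 𝓕g` turns `𝓕g = 0` into the vanishing of all integrals of `g` against test
functions. Hence `F` is not identically zero, its zeros are isolated, and a discrete subset of `ℂ`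
is countable.
-/

open MeasureTheory Complex FourierTransform

theorem MeasureTheory.Integrable.continuous_mul_of_hasCompactSupport {X R : Type*}
    [TopologicalSpace X] [T2Space X] [MeasurableSpace X] [OpensMeasurableSpace X] {μ : Measure X}
    [NormedRing R] [SecondCountableTopologyEither X R] {f g : X → R} (hg : Integrable g μ)
    (hgc : HasCompactSupport g) (hf : Continuous f) : Integrable (fun x => f x * g x) μ :=
  (integrableOn_iff_integrable_of_support_subset
    ((Function.support_mul_subset_right _ _).trans (subset_tsupport g))).1
    (hg.integrableOn.continuousOn_mul hf.continuousOn hgc)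

theorem MeasureTheory.Integrable.ae_eq_zero_of_fourier_eq_zero {V E : Type*}
    [NormedAddCommGroup V] [InnerProductSpace ℝ V] [FiniteDimensional ℝ V]
    [MeasurableSpace V] [BorelSpace V] [NormedAddCommGroup E] [NormedSpace ℂ E] [CompleteSpace E]
    {f : V → E} (hf : Integrable f) (h : 𝓕 f = 0) : f =ᵐ[volume] 0 := by
  refine ae_eq_zero_of_integral_contDiff_smul_eq_zero hf.locallyIntegrable fun φ hφ hφc => ?_
  let ψ : SchwartzMap V ℂ := (hφc.comp_left ofReal_zero).toSchwartzMap
    (ofRealCLM.contDiff.comp hφ)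
  let χ : SchwartzMap V ℂ := 𝓕⁻ ψ
  have hχ : 𝓕 (χ : V → ℂ) = fun x => (φ x : ℂ) := by
    rw [← SchwartzMap.fourier_coe, FourierTransform.fourier_fourierInv_eq]; rfl
  calc ∫ x, φ x • f x = ∫ x, 𝓕 (χ : V → ℂ) x • f x := by
        simp_rw [hχ, coe_smul]
    _ = ∫ ξ, χ ξ • 𝓕 f ξ := by
        simpa using! (VectorFourier.integral_fourierIntegral_smul_eq_flip (L := innerₗ V)
          Real.continuous_fourierChar continuous_inner χ.integrable hf)
    _ = 0 := by simp [h]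

theorem AnalyticOnNhd.countable_preimage_zero {𝕜 E : Type*} [NontriviallyNormedField 𝕜]
    [ConnectedSpace 𝕜] [SecondCountableTopology 𝕜] [NormedAddCommGroup E] [NormedSpace 𝕜 E]
    {f : 𝕜 → E} (hf : AnalyticOnNhd 𝕜 f Set.univ) {x : 𝕜} (hx : f x ≠ 0) :
    (f ⁻¹' {0}).Countable := by
  have hdiscrete : IsDiscrete (f ⁻¹' {0} ∩ Set.univ) :=
    isDiscrete_of_codiscreteWithin (hf.preimage_zero_mem_codiscrete hx)
  simpa using (HereditarilyLindelofSpace.isLindelof _).countable_of_isDiscrete hdiscrete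

noncomputable def fourierLaplace (g : ℝ → ℂ) (z : ℂ) : ℂ :=
  ∫ t : ℝ, cexp (I * z * t) * g t

theorem fourier_eq_fourierLaplace (g : ℝ → ℂ) (w : ℝ) :
    𝓕 g w = fourierLaplace g (-2 * Real.pi * w) := by
  rw [Real.fourier_real_eq_integral_exp_smul, fourierLaplace]
  congr 1 with t
  rw [smul_eq_mul]; push_cast; ring_nf

theorem hasDerivAt_fourierLaplace {g : ℝ → ℂ} (hg : Integrable g) (hgc : HasCompactSupport g)
    (z₀ : ℂ) : HasDerivAt (fourierLaplace g) (fourierLaplace (fun t => I * t * g t) z₀) z₀ := by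
  obtain ⟨C, hC⟩ := ((isCompact_closedBall z₀ 1).prod hgc).exists_bound_of_continuousOn
    (f := fun p : ℂ × ℝ => I * p.2 * cexp (I * p.1 * p.2)) (by fun_prop)
  have hbound : ∀ (t : ℝ), ∀ z ∈ Metric.ball z₀ 1,
      ‖cexp (I * z * t) * (I * t * g t)‖ ≤ C * ‖g t‖ := by
    intro t z hz
    by_cases ht : t ∈ tsupport g
    · calc ‖cexp (I * z * t) * (I * t * g t)‖ = ‖I * t * cexp (I * z * t)‖ * ‖g t‖ := by
            rw [← norm_mul]; ring_nf
        _ ≤ C * ‖g t‖ := by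
            gcongr
            exact hC (z, t) ⟨Metric.ball_subset_closedBall hz, ht⟩
    · simp [image_eq_zero_of_notMem_tsupport ht]
  have hint : ∀ {h : ℝ → ℂ}, Integrable h → HasCompactSupport h → ∀ z : ℂ,
      Integrable (fun t : ℝ => cexp (I * z * t) * h t) :=
    fun hh hhc z => hh.continuous_mul_of_hasCompactSupport hhc (by fun_prop)
  have hg' : Integrable (fun t : ℝ => I * t * g t) :=
    hg.continuous_mul_of_hasCompactSupport hgc (by fun_prop)
  have hderiv : ∀ (t : ℝ) (z : ℂ), HasDerivAt (fun z : ℂ => cexp (I * z * t) * g t)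
      (cexp (I * z * t) * (I * t * g t)) z := fun t z =>
    ((((hasDerivAt_id z).const_mul I).mul_const (t : ℂ)).cexp.mul_const (g t)).congr_deriv
      (by simp only [id, mul_one]; ring)
  exact (hasDerivAt_integral_of_dominated_loc_of_deriv_le (μ := volume) (x₀ := z₀)
    (F' := fun z t => cexp (I * z * t) * (I * t * g t))
    (Metric.ball_mem_nhds z₀ one_pos) (.of_forall fun z => (hint hg hgc z).aestronglyMeasurable)
    (hint hg hgc z₀) (hint hg' hgc.mul_left z₀).aestronglyMeasurable
    (.of_forall hbound) (hg.norm.const_mul C) (.of_forall fun t z _ => hderiv t z)).2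

/-- If an integrable function `g` supported in `[-1,1]` is not a.e. zero, then its
Fourier transform vanishes on at most a countable set. -/
theorem countable_zero_set_of_fourier (g : ℝ → ℂ)
    (hg : Integrable g volume)
    (hsupp : ∀ t : ℝ, t ∉ Set.Icc (-1 : ℝ) 1 → g t = 0)
    (hne : ¬ g =ᵐ[volume] 0) :
    {r : ℝ | ∫ t : ℝ, Complex.exp (Complex.I * r * t) * g t = 0}.Countable := by
  have hgc : HasCompactSupport g := HasCompactSupport.intro isCompact_Icc hsupp
  have hentire : AnalyticOnNhd ℂ (fourierLaplace g) Set.univ := fun z _ =>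
    Differentiable.analyticAt (fun z => (hasDerivAt_fourierLaplace hg hgc z).differentiableAt) z
  obtain ⟨z, hz⟩ : ∃ z, fourierLaplace g z ≠ 0 := by
    by_contra! hzero
    refine hne (hg.ae_eq_zero_of_fourier_eq_zero (funext fun w => ?_))
    rw [fourier_eq_fourierLaplace, hzero]; rfl
  exact (hentire.countable_preimage_zero hz).preimage ofReal_injective
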